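/- Every nonzero ideal of Z[i] coprime to 2 has a unique generator congruent to 1 modulo (1+i)^3. -/

import Mathlib

/-!
Since `(1 + i)³ = 2(i - 1)` has norm 8, the residues modulo it that are prime to `1 + i`
form a group of order 4, and the four units `±1, ±i` represent its four classes. A generator
`a` of an ideal prime to 2 has odd `re + im`, so exactly one of `a, -a, i a, -i a` is
`≡ 1 (mod (1 + i)³)`; any two such generators differ by a unit `v ≡ 1`, forcing `v = 1`.
-/

namespace GaussianInt

theorem one_add_sqrtd_pow_three : (1 + (⟨0, 1⟩ : GaussianInt)) ^ 3 = ⟨-2, 2⟩ := by decide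

theorem mk_neg_two_two_dvd_iff (z : GaussianInt) :
    (⟨-2, 2⟩ : GaussianInt) ∣ z ↔ 4 ∣ z.re + z.im ∧ 4 ∣ z.im - z.re := by
  constructor
  · rintro ⟨w, rfl⟩
    simp only [Zsqrtd.re_mul, Zsqrtd.im_mul]
    exact ⟨⟨-w.im, by ring⟩, ⟨w.re, by ring⟩⟩
  · rintro ⟨⟨p, hp⟩, ⟨q, hq⟩⟩
    exact ⟨⟨q, -p⟩, by ext <;> simp only [Zsqrtd.re_mul, Zsqrtd.im_mul] <;> omega⟩

theorem not_two_dvd_re_add_im_of_isCoprime_two {a : GaussianInt} (ha : IsCoprime a 2) :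
    ¬ 2 ∣ a.re + a.im := by
  rintro ⟨k, hk⟩
  have h_dvd_a : (⟨1, 1⟩ : GaussianInt) ∣ a :=
    ⟨⟨k, a.im - k⟩, by ext <;> simp only [Zsqrtd.re_mul, Zsqrtd.im_mul] <;> omega⟩
  have h_unit := ha.isUnit_of_dvd' h_dvd_a ⟨⟨1, -1⟩, by decide⟩
  rw [← Zsqrtd.norm_eq_one_iff] at h_unit
  exact absurd h_unit (by decide)

theorem exists_isUnit_mul_sub_one_dvd {a : GaussianInt} (ha : ¬ 2 ∣ a.re + a.im) :
    ∃ u : GaussianInt, IsUnit u ∧ (⟨-2, 2⟩ : GaussianInt) ∣ u * a - 1 := by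
  have of_norm_eq_one (u : GaussianInt) (hu : u.norm = 1)
      (h : 4 ∣ u.re * a.re - u.im * a.im - 1 + (u.re * a.im + u.im * a.re) ∧
        4 ∣ u.re * a.im + u.im * a.re - (u.re * a.re - u.im * a.im) + 1) :
      ∃ u : GaussianInt, IsUnit u ∧ (⟨-2, 2⟩ : GaussianInt) ∣ u * a - 1 := by
    refine ⟨u, (Zsqrtd.norm_eq_one_iff' (by norm_num) u).mp hu, ?_⟩
    rw [mk_neg_two_two_dvd_iff]
    simp only [Zsqrtd.re_sub, Zsqrtd.im_sub, Zsqrtd.re_one, Zsqrtd.im_one, Zsqrtd.re_mul,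
      Zsqrtd.im_mul, neg_mul, one_mul]
    omega
  rcases (by omega : (4 ∣ a.re - 1 + a.im ∧ 4 ∣ a.im - a.re + 1) ∨
      (4 ∣ a.re + 1 + a.im ∧ 4 ∣ a.im - a.re - 1) ∨
      (4 ∣ a.re - a.im - 1 ∧ 4 ∣ a.re + a.im + 1) ∨
      (4 ∣ a.im - a.re - 1 ∧ 4 ∣ a.re + a.im - 1)) with h | h | h | h
  · exact of_norm_eq_one 1 (by decide) (by dsimp only [Zsqrtd.re_one, Zsqrtd.im_one]; omega)
  · exact of_norm_eq_one (-1) (by decide) (by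
      dsimp only [Zsqrtd.re_neg, Zsqrtd.im_neg, Zsqrtd.re_one, Zsqrtd.im_one]; omega)
  · exact of_norm_eq_one ⟨0, 1⟩ (by decide) (by dsimp only; omega)
  · exact of_norm_eq_one ⟨0, -1⟩ (by decide) (by dsimp only; omega)

theorem eq_one_of_isUnit_of_dvd_sub_one {u : GaussianInt} (hu : IsUnit u)
    (h : (⟨-2, 2⟩ : GaussianInt) ∣ u - 1) : u = 1 := by
  have hnorm : u.re * u.re + u.im * u.im = 1 := by
    simpa [Zsqrtd.norm_def] using (Zsqrtd.norm_eq_one_iff' (by norm_num) u).mpr hu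
  rw [mk_neg_two_two_dvd_iff] at h
  simp only [Zsqrtd.re_sub, Zsqrtd.im_sub, Zsqrtd.re_one, Zsqrtd.im_one] at h
  have hre : -1 ≤ u.re ∧ u.re ≤ 1 := by constructor <;> nlinarith
  have him : -1 ≤ u.im ∧ u.im ≤ 1 := by constructor <;> nlinarith
  ext <;> simp only [Zsqrtd.re_one, Zsqrtd.im_one] <;> omega

end GaussianInt

open GaussianInt in
theorem stmt_2_general (I : Ideal GaussianInt)
    (hcop : IsCoprime I (Ideal.span {2})) :
    ∃! g : GaussianInt,
      Ideal.span {g} = I ∧ (1 + (⟨0, 1⟩ : GaussianInt)) ^ 3 ∣ g - 1 := by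
  obtain ⟨a, rfl⟩ := (IsPrincipalIdealRing.principal I).principal
  rw [Ideal.submodule_span_eq, Ideal.isCoprime_span_singleton_iff] at hcop
  rw [one_add_sqrtd_pow_three]
  obtain ⟨u, hu, hua⟩ :=
    exists_isUnit_mul_sub_one_dvd (not_two_dvd_re_add_im_of_isCoprime_two hcop)
  have hspan : Ideal.span {u * a} = Ideal.span {a} :=
    Ideal.span_singleton_eq_span_singleton.mpr (associated_unit_mul_left a u hu)
  refine ⟨u * a, ⟨hspan, hua⟩, ?_⟩
  rintro g ⟨hg, hg1⟩
  obtain ⟨v, rfl⟩ := Ideal.span_singleton_eq_span_singleton.mp (hspan.trans hg.symm)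
  have hv : (⟨-2, 2⟩ : GaussianInt) ∣ (v : GaussianInt) - 1 := by
    convert dvd_sub hg1 (dvd_mul_of_dvd_left hua v) using 1
    ring
  rw [eq_one_of_isUnit_of_dvd_sub_one v.isUnit hv, mul_one]

/-- Every nonzero ideal of `ℤ[i]` coprime to `2` has a unique generator
congruent to `1` modulo `(1+i)^3`. -/
theorem stmt_2 (I : Ideal GaussianInt) (hI : I ≠ ⊥)
    (hcop : IsCoprime I (Ideal.span {2})) :
    ∃! g : GaussianInt,
      Ideal.span {g} = I ∧ (1 + (⟨0, 1⟩ : GaussianInt)) ^ 3 ∣ g - 1 :=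
  stmt_2_general I hcop
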